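/- arXiv:2210.14654 — 2 statements merged into one kernel-verified Lean document; each statement's English description precedes it below -/
import Mathlib

section
/- Let N ≥ 2 and q ∈ (1,∞], with conjugate exponent q' (1/q + 1/q' = 1, with q' = 1 when q = ∞). Let K(x',0,y,t) = (y_N/t) Γ_{N−1}(x'−y',t) Γ_1(y_N,t) for (x',y,t) ∈ ℝ^{N−1} × ℝ^N_+ × (0,∞). Then there exists C > 0 such that for all x' ∈ ℝ^{N−1} and t > 0: ∫_{ℝ^N_+} [ |K(x',0,y,t)| y_N^{N/q} ]^{q'} dy ≤ C t^{−q'/2}. -/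
open MeasureTheory Real Set ENNReal

noncomputable section

abbrev E' (N : ℕ) := EuclideanSpace ℝ (Fin (N - 1))
abbrev HS (N : ℕ) := E' N × ℝ

/-- The half-space `ℝ^N_+ = ℝ^{N-1} × (0,∞)`. -/
def halfSpace (N : ℕ) : Set (HS N) := {x | 0 < x.2}

/-- The Gauss kernel in `ℝ^d`. -/
def gaussK (d : ℕ) (z : EuclideanSpace ℝ (Fin d)) (t : ℝ) : ℝ :=
  (4 * π * t) ^ (-(d : ℝ) / 2) * Real.exp (-‖z‖ ^ 2 / (4 * t))

/-- The one-dimensional Gauss kernel. -/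
def gauss1 (z t : ℝ) : ℝ :=
  (4 * π * t) ^ (-(1 : ℝ) / 2) * Real.exp (-z ^ 2 / (4 * t))

/-- Boundary trace of the normal derivative of the Dirichlet heat kernel:
`K(x',0,y,t) = (y_N/t) Γ_{N-1}(x'-y',t) Γ_1(y_N,t)`. -/
def Kb (N : ℕ) (x' : E' N) (y : HS N) (t : ℝ) : ℝ :=
  (y.2 / t) * gaussK (N - 1) (x' - y.1) t * gauss1 y.2 t

lemma gauss_int_shift {n : ℕ} (x' : EuclideanSpace ℝ (Fin n)) {b : ℝ} (hb : 0 < b) :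
    ∫ u : EuclideanSpace ℝ (Fin n), Real.exp (-(b * ‖x' - u‖ ^ 2)) = (π / b) ^ ((n : ℝ) / 2) := by
  have h := integral_sub_left_eq_self
    (fun v : EuclideanSpace ℝ (Fin n) => Real.exp (-(b * ‖v‖ ^ 2))) volume x'
  calc ∫ u : EuclideanSpace ℝ (Fin n), Real.exp (-(b * ‖x' - u‖ ^ 2))
      = ∫ u : EuclideanSpace ℝ (Fin n), Real.exp (-(b * ‖u‖ ^ 2)) := h
    _ = (π / b) ^ ((n : ℝ) / 2) := by
        have := GaussianFourier.integral_rexp_neg_mul_sq_norm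
          (V := EuclideanSpace ℝ (Fin n)) hb
        simp only [neg_mul] at this ⊢
        rw [this, finrank_euclideanSpace_fin]

lemma line_gauss_int {a b : ℝ} (ha : -1 < a) (hb : 0 < b) :
    ∫ v in Set.Ioi (0 : ℝ), v ^ a * Real.exp (-(b * v ^ 2)) =
      b ^ (-(a + 1) / 2) * (1 / 2) * Real.Gamma ((a + 1) / 2) := by
  rw [← integral_rpow_mul_exp_neg_mul_rpow two_pos ha hb]
  refine setIntegral_congr_fun measurableSet_Ioi fun v hv => ?_
  have h2 : v ^ (2 : ℝ) = v ^ 2 := by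
    rw [← Real.rpow_natCast v 2]; norm_num
  rw [h2, neg_mul]

/-- for `q ∈ (1,∞]` with conjugate exponent `q'` (so `q' = 1` when `q = ∞`),
there exists `C > 0` such that `∫_{ℝ^N_+} (|K(x',0,y,t)| y_N^{N/q})^{q'} dy ≤ C t^{-q'/2}`
for all `x' ∈ ℝ^{N-1}` and `t > 0`. Here `q : ℝ≥0∞`, `1/q` is interpreted as `0` for
`q = ∞`, and `q' = (1 - 1/q)⁻¹`. -/
theorem stmt_13 (N : ℕ) (hN : 2 ≤ N) (q : ℝ≥0∞) (hq : 1 < q) (q' : ℝ)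
    (hq' : q' = (1 - (q⁻¹).toReal)⁻¹) :
    ∃ C : ℝ, 0 < C ∧ ∀ (x' : E' N) (t : ℝ), 0 < t →
      (∫ y in halfSpace N, (|Kb N x' y t| * y.2 ^ ((N : ℝ) * (q⁻¹).toReal)) ^ q')
        ≤ C * t ^ (-q' / 2) := by
  set s : ℝ := (q⁻¹).toReal with hs
  have hs0 : 0 ≤ s := ENNReal.toReal_nonneg
  have hs1 : s < 1 := by
    have hq0 : q ≠ 0 := (zero_lt_one.trans hq).ne'
    have h1 : q⁻¹ < 1 := ENNReal.inv_lt_one.mpr hq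
    have h2 := (ENNReal.toReal_lt_toReal (ENNReal.inv_ne_top.mpr hq0) ENNReal.one_ne_top).mpr h1
    rw [hs]
    simpa only [ENNReal.toReal_one] using h2
  have h1s : (0:ℝ) < 1 - s := by linarith
  have hq'pos : 0 < q' := by rw [hq']; positivity
  have hkey : q' * (1 - s) = 1 := by
    rw [hq']; exact inv_mul_cancel₀ h1s.ne'
  have hsq' : s * q' = q' - 1 := by nlinarith [hkey]
  set c : ℝ := ((N - 1 : ℕ) : ℝ) with hcdef
  have hc : c = (N : ℝ) - 1 := by
    rw [hcdef, Nat.cast_sub (by omega)]; simp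
  set a : ℝ := (1 + (N : ℝ) * s) * q' with hadef
  have ha : -1 < a := by
    have ha0 : 0 < a := by rw [hadef]; positivity
    linarith
  have hΓ : 0 < Real.Gamma ((a + 1) / 2) := Real.Gamma_pos_of_pos (by positivity)
  refine ⟨(4*π) ^ (-c/2*q') * (4*π/q') ^ (c/2) * ((4*π) ^ (-(1:ℝ)/2)) ^ q' *
      ((q'/4) ^ (-(a+1)/2) * (1/2) * Real.Gamma ((a+1)/2)), by positivity, ?_⟩
  intro x' t ht
  have hbt : 0 < q' / (4*t) := by positivity
  have h4t : (0:ℝ) < 4*π*t := by positivity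
  -- Step 1: Fubini / product structure
  have hset : halfSpace N = (univ : Set (E' N)) ×ˢ Ioi (0:ℝ) := by
    ext y; simp [halfSpace, Set.mem_prod]
  have hmeas : MeasurableSet ((univ : Set (E' N)) ×ˢ Ioi (0:ℝ)) :=
    MeasurableSet.univ.prod measurableSet_Ioi
  have h1 : (∫ y in halfSpace N, (|Kb N x' y t| * y.2 ^ ((N : ℝ) * s)) ^ q')
      = (∫ u : E' N, gaussK (N-1) (x' - u) t ^ q') *
        ∫ v in Ioi (0:ℝ), ((v/t) * gauss1 v t * v ^ ((N:ℝ)*s)) ^ q' := by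
    rw [hset]
    have hpt : ∀ y ∈ (univ : Set (E' N)) ×ˢ Ioi (0:ℝ),
        (|Kb N x' y t| * y.2 ^ ((N : ℝ) * s)) ^ q'
        = gaussK (N-1) (x' - y.1) t ^ q' * ((y.2/t) * gauss1 y.2 t * y.2 ^ ((N:ℝ)*s)) ^ q' := by
      rintro ⟨y1, y2⟩ hy
      have hy2 : 0 < y2 := hy.2
      have hG : 0 ≤ gaussK (N-1) (x' - y1) t := by unfold gaussK; positivity
      have hrest : 0 ≤ y2/t * gauss1 y2 t * y2 ^ ((N:ℝ)*s) := by unfold gauss1; positivity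
      have habs : |Kb N x' (y1, y2) t| = Kb N x' (y1, y2) t := by
        apply abs_of_nonneg; unfold Kb gaussK gauss1; positivity
      simp only [habs]
      show (Kb N x' (y1, y2) t * y2 ^ ((N:ℝ)*s)) ^ q' = _
      unfold Kb
      show ((y2/t) * gaussK (N-1) (x' - y1) t * gauss1 y2 t * y2 ^ ((N:ℝ)*s)) ^ q' = _
      rw [show (y2/t) * gaussK (N-1) (x' - y1) t * gauss1 y2 t * y2 ^ ((N:ℝ)*s)
          = gaussK (N-1) (x' - y1) t * (y2/t * gauss1 y2 t * y2 ^ ((N:ℝ)*s)) by ring,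
        Real.mul_rpow hG hrest]
    rw [setIntegral_congr_fun hmeas hpt, Measure.volume_eq_prod,
      setIntegral_prod_mul (fun u => gaussK (N-1) (x' - u) t ^ q')
        (fun v => ((v/t) * gauss1 v t * v ^ ((N:ℝ)*s)) ^ q'), setIntegral_univ]
  -- Step 2: the (N-1)-dimensional Gaussian integral
  have hA : (∫ u : E' N, gaussK (N-1) (x' - u) t ^ q')
      = (4*π*t) ^ (-c/2*q') * (π/(q'/(4*t))) ^ (c/2) := by
    have hfun : (fun u : E' N => gaussK (N-1) (x' - u) t ^ q')
        = fun u : E' N => (4*π*t) ^ (-c/2*q') * Real.exp (-(q'/(4*t) * ‖x' - u‖^2)) := by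
      funext u
      unfold gaussK
      rw [Real.mul_rpow (Real.rpow_nonneg h4t.le _) (Real.exp_pos _).le,
        ← Real.rpow_mul h4t.le, ← Real.exp_mul,
        show -‖x' - u‖ ^ 2 / (4 * t) * q' = -(q' / (4 * t) * ‖x' - u‖ ^ 2) by
          field_simp]
    rw [hfun, integral_const_mul, gauss_int_shift x' hbt, hcdef]
  -- Step 3: the one-dimensional integral
  have hB : (∫ v in Ioi (0:ℝ), ((v/t) * gauss1 v t * v ^ ((N:ℝ)*s)) ^ q')
      = (t⁻¹ * (4*π*t) ^ (-(1:ℝ)/2)) ^ q' *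
        ((q'/(4*t)) ^ (-(a+1)/2) * (1/2) * Real.Gamma ((a+1)/2)) := by
    have hpt : ∀ v ∈ Ioi (0:ℝ), ((v/t) * gauss1 v t * v ^ ((N:ℝ)*s)) ^ q'
        = (t⁻¹ * (4*π*t) ^ (-(1:ℝ)/2)) ^ q' * (v ^ a * Real.exp (-(q'/(4*t) * v^2))) := by
      intro v hv
      have hv0 : 0 < v := hv
      unfold gauss1
      rw [show v/t * ((4*π*t) ^ (-(1:ℝ)/2) * Real.exp (-v^2/(4*t))) * v ^ ((N:ℝ)*s)
          = (t⁻¹ * (4*π*t) ^ (-(1:ℝ)/2)) * ((v * v ^ ((N:ℝ)*s)) * Real.exp (-v^2/(4*t))) by ring]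
      rw [show v * v ^ ((N:ℝ)*s) = v ^ (1 + (N:ℝ)*s) by
        rw [Real.rpow_add hv0, Real.rpow_one]]
      rw [Real.mul_rpow (by positivity) (by positivity),
        Real.mul_rpow (by positivity) (Real.exp_pos _).le,
        ← Real.rpow_mul hv0.le, ← Real.exp_mul, hadef]
      congr 2
      field_simp
    rw [setIntegral_congr_fun measurableSet_Ioi hpt, integral_const_mul,
      line_gauss_int ha hbt]
  rw [h1, hA, hB]
  -- Step 4: collect powers of t
  have hsplit1 : (4*π*t) ^ (-c/2*q') = (4*π) ^ (-c/2*q') * t ^ (-c/2*q') := by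
    rw [show (4:ℝ)*π*t = (4*π)*t by ring, Real.mul_rpow (by positivity) ht.le]
  have hsplit2 : (π/(q'/(4*t))) ^ (c/2) = (4*π/q') ^ (c/2) * t ^ (c/2) := by
    rw [show π/(q'/(4*t)) = (4*π/q')*t by field_simp,
      Real.mul_rpow (by positivity) ht.le]
  have hsplit3 : (t⁻¹ * (4*π*t) ^ (-(1:ℝ)/2)) ^ q'
      = ((4*π) ^ (-(1:ℝ)/2)) ^ q' * t ^ ((-(1:ℝ)/2 + -1)*q') := by
    rw [show t⁻¹ * (4*π*t) ^ (-(1:ℝ)/2) = (4*π) ^ (-(1:ℝ)/2) * t ^ (-(1:ℝ)/2 + -1) by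
        rw [show (4:ℝ)*π*t = (4*π)*t by ring, Real.mul_rpow (by positivity) ht.le,
          Real.rpow_add ht, Real.rpow_neg_one]; ring]
    rw [Real.mul_rpow (by positivity) (by positivity), ← Real.rpow_mul ht.le]
  have hsplit4 : (q'/(4*t)) ^ (-(a+1)/2)
      = (q'/4) ^ (-(a+1)/2) * t ^ ((-1:ℝ)*(-(a+1)/2)) := by
    rw [show q'/(4*t) = (q'/4) * t ^ (-1:ℝ) by rw [Real.rpow_neg_one]; field_simp,
      Real.mul_rpow (by positivity) (by positivity), ← Real.rpow_mul ht.le]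
  have hts : t ^ (-c/2*q') * t ^ (c/2) * t ^ ((-(1:ℝ)/2 + -1)*q') * t ^ ((-1:ℝ)*(-(a+1)/2))
      = t ^ (-q'/2) := by
    rw [← Real.rpow_add ht, ← Real.rpow_add ht, ← Real.rpow_add ht]
    congr 1
    rw [hc, hadef]
    linear_combination ((N:ℝ)/2) * hsq'
  rw [hsplit1, hsplit2, hsplit3, hsplit4, ← hts]
  apply le_of_eq
  ring

end
end

section
/- Let N ≥ 2, 1 ≤ q ≤ r < ∞, define 1/p = 1 + 1/r − 1/q, let α(r) = (N−1)(1/q − 1/r) + 1/q, let θ̃ = p/q' where 1/q + 1/q' = 1, and let β = N(1 − 1/p). Let K(x',0,y,t) = (y_N/t) Γ_{N−1}(x'−y',t) Γ_1(y_N,t). Then there exists C > 0 such that for all y = (y',y_N) ∈ ℝ^N_+ and t > 0: ∫_{ℝ^{N−1}} [ |K(x',0,y,t)| y_N^{(α(r) − θ̃β)/(1 − θ̃)} ]^p dx' ≤ C t^{−p/2}, where (α(r) − θ̃β)/(1 − θ̃) = (N−1)(1 − 1/p) + 1. -/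
open MeasureTheory Real Set

noncomputable section

lemma aux_pow_exp (c m : ℝ) (hc : 0 < c) (hm : 0 ≤ m) :
    ∃ C : ℝ, 0 < C ∧ ∀ u : ℝ, 0 ≤ u → u ^ m * Real.exp (-(c * u ^ 2)) ≤ C := by
  obtain ⟨n, hn⟩ := exists_nat_ge (m / 2)
  refine ⟨1 + n.factorial / c ^ n, by positivity, fun u hu => ?_⟩
  have hexp : Real.exp (-(c * u ^ 2)) ≤ 1 := by
    rw [Real.exp_le_one_iff]; nlinarith
  have hkey : u ^ m ≤ 1 + (u ^ 2) ^ n := by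
    rcases le_total u 1 with h1 | h1
    · have := Real.rpow_le_one hu h1 hm
      nlinarith [pow_nonneg (sq_nonneg u) n]
    · have h2 : u ^ m ≤ u ^ ((2 * n : ℕ) : ℝ) :=
        Real.rpow_le_rpow_of_exponent_le h1 (by push_cast; linarith)
      rw [Real.rpow_natCast] at h2
      have : u ^ (2 * n) = (u ^ 2) ^ n := by rw [pow_mul]
      nlinarith
  have hfac : (u ^ 2) ^ n * Real.exp (-(c * u ^ 2)) ≤ n.factorial / c ^ n := by
    have hsum : (c * u ^ 2) ^ n / n.factorial ≤ Real.exp (c * u ^ 2) := by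
      calc (c * u ^ 2) ^ n / n.factorial
          ≤ ∑ i ∈ Finset.range (n + 1), (c * u ^ 2) ^ i / i.factorial := by
            refine Finset.single_le_sum (f := fun i => (c * u ^ 2) ^ i / (i.factorial : ℝ))
              (fun i _ => by positivity) (Finset.self_mem_range_succ n)
        _ ≤ Real.exp (c * u ^ 2) := Real.sum_le_exp_of_nonneg (by positivity) _
    have hcn : (0:ℝ) < c ^ n := by positivity
    have hfn : (0:ℝ) < (n.factorial : ℝ) := by positivity
    have h1 : (c * u ^ 2) ^ n ≤ (n.factorial : ℝ) * Real.exp (c * u ^ 2) := by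
      rw [div_le_iff₀ hfn] at hsum; linarith
    have h2 : (u ^ 2) ^ n * Real.exp (-(c * u ^ 2))
        = (c * u ^ 2) ^ n / (c ^ n * Real.exp (c * u ^ 2)) := by
      rw [Real.exp_neg, mul_pow]; field_simp
    rw [h2, div_le_div_iff₀ (by positivity) hcn]
    calc (c * u ^ 2) ^ n * c ^ n
        ≤ ((n.factorial : ℝ) * Real.exp (c * u ^ 2)) * c ^ n :=
          mul_le_mul_of_nonneg_right h1 hcn.le
      _ = (n.factorial : ℝ) * (c ^ n * Real.exp (c * u ^ 2)) := by ring
  calc u ^ m * Real.exp (-(c * u ^ 2))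
      ≤ (1 + (u ^ 2) ^ n) * Real.exp (-(c * u ^ 2)) := by
        exact mul_le_mul_of_nonneg_right hkey (Real.exp_pos _).le
    _ = Real.exp (-(c * u ^ 2)) + (u ^ 2) ^ n * Real.exp (-(c * u ^ 2)) := by ring
    _ ≤ 1 + n.factorial / c ^ n := add_le_add hexp hfac

lemma aux_scaled (m : ℝ) (hm : 0 ≤ m) :
    ∃ C : ℝ, 0 < C ∧ ∀ y t : ℝ, 0 < y → 0 < t →
      y ^ m * Real.exp (-y ^ 2 / (4 * t)) ≤ C * t ^ (m / 2) := by
  obtain ⟨C, hC, hCb⟩ := aux_pow_exp (1/4) m (by norm_num) hm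
  refine ⟨C, hC, fun y t hy ht => ?_⟩
  set u : ℝ := y / Real.sqrt t with hu_def
  have hst : (0:ℝ) < Real.sqrt t := Real.sqrt_pos.2 ht
  have hu : 0 < u := div_pos hy hst
  have hu2 : u ^ 2 = y ^ 2 / t := by
    rw [hu_def, div_pow, Real.sq_sqrt ht.le]
  have hum : u ^ m = y ^ m / t ^ (m / 2) := by
    rw [hu_def, Real.div_rpow hy.le hst.le]
    congr 1
    rw [Real.sqrt_eq_rpow, ← Real.rpow_mul ht.le]
    ring_nf
  have hb := hCb u hu.le
  rw [hum, hu2] at hb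
  have harg : -(1/4 * (y ^ 2 / t)) = -y^2/(4*t) := by field_simp
  rw [harg] at hb
  have htm : (0:ℝ) < t ^ (m/2) := Real.rpow_pos_of_pos ht _
  calc y ^ m * Real.exp (-y ^ 2 / (4 * t))
      = (y ^ m / t ^ (m/2) * Real.exp (-y^2/(4*t))) * t ^ (m/2) := by
        field_simp
    _ ≤ C * t ^ (m/2) := mul_le_mul_of_nonneg_right hb htm.le

/-- let `1 ≤ q ≤ r < ∞`, `1/p = 1 + 1/r - 1/q`,
`α(r) = (N-1)(1/q - 1/r) + 1/q`, `θ̃ = p/q'` (where `1/q + 1/q' = 1`, so `θ̃ = p(1-1/q)`),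
`β = N(1-1/p)`. Then `(α(r) - θ̃β)/(1-θ̃) = (N-1)(1-1/p) + 1`, and there exists `C > 0`
such that `∫_{ℝ^{N-1}} (|K(x',0,y,t)| y_N^{(α(r)-θ̃β)/(1-θ̃)})^p dx' ≤ C t^{-p/2}`
for all `y ∈ ℝ^N_+` and `t > 0`. -/
theorem stmt_15 (N : ℕ) (hN : 2 ≤ N) (q r p : ℝ) (hq : 1 ≤ q) (hqr : q ≤ r)
    (hp : p⁻¹ = 1 + r⁻¹ - q⁻¹)
    (α θt β : ℝ) (hα : α = (N - 1 : ℝ) * (q⁻¹ - r⁻¹) + q⁻¹)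
    (hθ : θt = p * (1 - q⁻¹)) (hβ : β = (N : ℝ) * (1 - p⁻¹)) :
    (α - θt * β) / (1 - θt) = (N - 1 : ℝ) * (1 - p⁻¹) + 1 ∧
    ∃ C : ℝ, 0 < C ∧ ∀ (y : HS N) (t : ℝ), 0 < y.2 → 0 < t →
      (∫ x' : E' N, (|Kb N x' y t| * y.2 ^ ((α - θt * β) / (1 - θt))) ^ p)
        ≤ C * t ^ (-p / 2) := by
  have hq0 : (0:ℝ) < q := lt_of_lt_of_le one_pos hq
  have hr0 : (0:ℝ) < r := lt_of_lt_of_le hq0 hqr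
  have hrinv : (0:ℝ) < r⁻¹ := inv_pos.2 hr0
  have hqrinv : r⁻¹ ≤ q⁻¹ := inv_anti₀ hq0 hqr
  have hqinv1 : q⁻¹ ≤ 1 := by rw [inv_le_one_iff₀]; right; exact hq
  have hpinv_pos : (0:ℝ) < p⁻¹ := by rw [hp]; linarith
  have hpinv_le : p⁻¹ ≤ 1 := by rw [hp]; linarith
  have hp0 : (0:ℝ) < p := inv_pos.mp hpinv_pos
  have hpp : p * p⁻¹ = 1 := mul_inv_cancel₀ hp0.ne'
  have hp1 : (1:ℝ) ≤ p := by nlinarith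
  have hrinv' : r⁻¹ = p⁻¹ - 1 + q⁻¹ := by rw [hp]; ring
  have hθ1 : θt < 1 := by rw [hθ]; nlinarith [mul_pos hp0 hrinv]
  have h1θ : (0:ℝ) < 1 - θt := by linarith
  have hfirst : (α - θt * β) / (1 - θt) = (N - 1 : ℝ) * (1 - p⁻¹) + 1 := by
    rw [div_eq_iff h1θ.ne', hα, hθ, hβ, hrinv']
    linear_combination (1 - q⁻¹) * hpp
  refine ⟨hfirst, ?_⟩
  rw [hfirst]
  set e : ℝ := (N - 1 : ℝ) * (1 - p⁻¹) + 1 with he_def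
  have hN1 : (1:ℝ) ≤ (N:ℝ) - 1 := by
    have h2 : (2:ℝ) ≤ (N:ℝ) := by exact_mod_cast hN
    linarith
  have he1 : (1:ℝ) ≤ e := by
    have := mul_nonneg (by linarith : (0:ℝ) ≤ (N:ℝ)-1) (by linarith : (0:ℝ) ≤ 1-p⁻¹)
    rw [he_def]; linarith
  set m : ℝ := 1 + e with hm_def
  have hm0 : (0:ℝ) ≤ m := by linarith
  obtain ⟨C1, hC10, hC1b⟩ := aux_scaled m hm0
  have hnc : ((N - 1 : ℕ) : ℝ) = (N:ℝ) - 1 := by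
    rw [Nat.cast_sub (by omega : 1 ≤ N)]; norm_num
  have hπ : (0:ℝ) < π := Real.pi_pos
  refine ⟨C1 ^ p * (4*π) ^ (-(N:ℝ)/2 * p) * (4*π/p) ^ (((N:ℝ)-1)/2), by positivity, ?_⟩
  intro y t hy ht
  have h4πt : (0:ℝ) < 4 * π * t := by positivity
  set A : ℝ := (y.2 / t) * (4*π*t) ^ (-((N-1:ℕ):ℝ) / 2) *
      ((4*π*t) ^ (-(1:ℝ)/2) * Real.exp (-y.2^2/(4*t))) * y.2 ^ e with hA_def
  have hA0 : 0 < A := by rw [hA_def]; positivity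
  have hint : ∀ x' : E' N, (|Kb N x' y t| * y.2 ^ e) ^ p
      = A ^ p * Real.exp (-(p/(4*t)) * ‖x' - y.1‖^2) := by
    intro x'
    have hKb : Kb N x' y t = (y.2/t) *
        ((4*π*t) ^ (-((N-1:ℕ):ℝ)/2) * Real.exp (-‖x' - y.1‖^2/(4*t))) *
        ((4*π*t) ^ (-(1:ℝ)/2) * Real.exp (-y.2^2/(4*t))) := rfl
    have h1 : |Kb N x' y t| * y.2 ^ e = A * Real.exp (-‖x' - y.1‖^2/(4*t)) := by
      rw [hKb, abs_of_nonneg (by positivity), hA_def]; ring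
    rw [h1, Real.mul_rpow hA0.le (Real.exp_pos _).le, ← Real.exp_mul]
    congr 2
    ring
  have hπb : π / (p/(4*t)) = (4*π/p) * t := by field_simp
  calc (∫ x' : E' N, (|Kb N x' y t| * y.2 ^ e) ^ p)
      = ∫ x' : E' N, A ^ p * Real.exp (-(p/(4*t)) * ‖x' - y.1‖^2) := by
        simp only [hint]
    _ = A ^ p * ∫ x' : E' N, Real.exp (-(p/(4*t)) * ‖x' - y.1‖^2) :=
        MeasureTheory.integral_const_mul _ _
    _ = A ^ p * ∫ x' : E' N, Real.exp (-(p/(4*t)) * ‖x'‖^2) := by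
        rw [integral_sub_right_eq_self (fun z : E' N => Real.exp (-(p/(4*t)) * ‖z‖^2)) y.1]
    _ = A ^ p * (π / (p/(4*t))) ^ (((N-1:ℕ):ℝ)/2) := by
        rw [GaussianFourier.integral_rexp_neg_mul_sq_norm (by positivity : (0:ℝ) < p/(4*t)),
          finrank_euclideanSpace_fin]
    _ ≤ (C1 * t^(m/2) * (t⁻¹ * (4*π*t) ^ (-(N:ℝ)/2))) ^ p *
          (π / (p/(4*t))) ^ (((N-1:ℕ):ℝ)/2) := by
        refine mul_le_mul_of_nonneg_right ?_
          (Real.rpow_pos_of_pos (by positivity) _).le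
        refine Real.rpow_le_rpow hA0.le ?_ hp0.le
        have hA_eq : A = (y.2 ^ m * Real.exp (-y.2^2/(4*t))) *
            (t⁻¹ * (4*π*t) ^ (-(N:ℝ)/2)) := by
          have h1 : y.2 ^ m = y.2 * y.2 ^ e := by
            rw [hm_def, Real.rpow_add hy, Real.rpow_one]
          have h2 : (4*π*t) ^ (-(N:ℝ)/2)
              = (4*π*t) ^ (-((N-1:ℕ):ℝ)/2) * (4*π*t) ^ (-(1:ℝ)/2) := by
            rw [← Real.rpow_add h4πt, hnc]
            congr 1
            ring
          rw [hA_def, h1, h2]; ring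
        rw [hA_eq]
        exact mul_le_mul_of_nonneg_right (hC1b y.2 t hy ht) (by positivity)
    _ = (C1 ^ p * (4*π) ^ (-(N:ℝ)/2 * p) * (4*π/p) ^ (((N:ℝ)-1)/2))
          * t ^ ((m/2 + -1 + -(N:ℝ)/2) * p + ((N:ℝ)-1)/2) := by
        rw [hπb, hnc]
        rw [Real.mul_rpow (by positivity : (0:ℝ) ≤ 4*π) ht.le]
        have hX : C1 * t^(m/2) * (t⁻¹ * ((4*π) ^ (-(N:ℝ)/2) * t ^ (-(N:ℝ)/2)))
            = (C1 * (4*π) ^ (-(N:ℝ)/2)) * t ^ (m/2 + -1 + -(N:ℝ)/2) := by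
          rw [Real.rpow_add ht, Real.rpow_add ht, Real.rpow_neg_one]; ring
        rw [hX]
        rw [Real.mul_rpow (by positivity) (Real.rpow_pos_of_pos ht _).le,
          Real.mul_rpow hC10.le (Real.rpow_pos_of_pos (by positivity) _).le,
          ← Real.rpow_mul ht.le, ← Real.rpow_mul (by positivity : (0:ℝ) ≤ 4*π),
          Real.mul_rpow (by positivity : (0:ℝ) ≤ 4*π/p) ht.le,
          Real.rpow_add ht]
        ring
    _ = (C1 ^ p * (4*π) ^ (-(N:ℝ)/2 * p) * (4*π/p) ^ (((N:ℝ)-1)/2)) * t ^ (-p/2) := by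
        congr 1
        congr 1
        rw [hm_def, he_def]
        linear_combination (-((N:ℝ)-1)/2) * hpp

end
end
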